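/- Let Φ be an N-function with index s ≥ 1. Then there exists a constant c > 0, depending only on s, such that for all s₁, s₂ ≥ 0 and every ε with 0 < ε ≤ 1 one has s₁·Φ'(s₂) + s₂·Φ'(s₁) ≤ ε·Φ(s₁) + (c/ε^{s})·Φ(s₂). -/

import Mathlib

open Real Set Filter MeasureTheory
open scoped RealInnerProductSpace

/-! The index condition makes `Φ'(t) t^(-s)` decreasing and `Φ'(t) t^(-1/s)` increasing, hence
`Φ'(λt) ≤ λ^s Φ'(t)` for `λ ≥ 1` and `Φ'(μt) ≤ μ^(1/s) Φ'(t)` for `μ ≤ 1`. Splitting according to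
whether `s₂ ≤ δ s₁` (resp. `s₂ ≤ δ^s s₁`), each cross term `s₂ Φ'(s₁)`, `s₁ Φ'(s₂)` is at most
`δ s₁ Φ'(s₁) + δ^(-s) s₂ Φ'(s₂)`. The tangent line of `Φ` at `t/2` together with the doubling
bound gives `t Φ'(t) ≤ 2^(s+1) Φ(t)`, and `δ = ε / 2^(s+2)` turns this into the claim. -/

/-- An N-function with index `s ≥ 1`: a function `Φ : [0,∞) → [0,∞)` with `Φ(0) = 0`,
strictly increasing and convex, `Φ(t)/t → 0` as `t → 0⁺`, `Φ(t)/t → ∞` as `t → ∞`,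
continuously differentiable on `[0,∞)`, twice continuously differentiable on `(0,∞)`,
and `Φ'(t) > 0` with `(1/s)·Φ'(t) ≤ t·Φ''(t) ≤ s·Φ'(t)` for every `t > 0`. -/
structure IsNFunction (Φ : ℝ → ℝ) (s : ℝ) : Prop where
  s_ge_one : 1 ≤ s
  nonneg : ∀ t, 0 ≤ t → 0 ≤ Φ t
  zero : Φ 0 = 0
  strictMonoOn : StrictMonoOn Φ (Ici 0)
  convexOn : ConvexOn ℝ (Ici 0) Φ
  tendsto_zero : Tendsto (fun t => Φ t / t) (nhdsWithin 0 (Ioi 0)) (nhds 0)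
  tendsto_atTop : Tendsto (fun t => Φ t / t) atTop atTop
  contDiffOn_one : ContDiffOn ℝ 1 Φ (Ici 0)
  contDiffOn_two : ContDiffOn ℝ 2 Φ (Ioi 0)
  deriv_pos : ∀ t, 0 < t → 0 < deriv Φ t
  index_lower : ∀ t, 0 < t → (1 / s) * deriv Φ t ≤ t * deriv (deriv Φ) t
  index_upper : ∀ t, 0 < t → t * deriv (deriv Φ) t ≤ s * deriv Φ t

section PowerGrowth

variable {f f' : ℝ → ℝ} {p : ℝ}

lemma antitoneOn_mul_rpow_neg_of_mul_deriv_le (hf : ∀ t > 0, HasDerivAt f (f' t) t)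
    (h : ∀ t > 0, t * f' t ≤ p * f t) :
    AntitoneOn (fun t => f t * t ^ (-p)) (Ioi 0) := by
  have hg : ∀ t > 0, HasDerivAt (fun t => f t * t ^ (-p))
      (t ^ (-p - 1) * (t * f' t - p * f t)) t := by
    intro t ht
    refine ((hf t ht).mul (hasDerivAt_rpow_const (p := -p) (Or.inl ht.ne'))).congr_deriv ?_
    rw [rpow_sub_one ht.ne']
    field_simp
    ring
  refine antitoneOn_of_hasDerivWithinAt_nonpos (f' := fun t => t ^ (-p - 1) * (t * f' t - p * f t))
    (convex_Ioi 0)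
    (fun t ht => (hg t ht).continuousAt.continuousWithinAt) ?_ ?_ <;> rw [interior_Ioi]
  · exact fun t ht => (hg t ht).hasDerivWithinAt
  · exact fun t ht =>
      mul_nonpos_of_nonneg_of_nonpos (rpow_nonneg (le_of_lt ht) _) (sub_nonpos.2 (h t ht))

lemma monotoneOn_mul_rpow_neg_of_le_mul_deriv (hf : ∀ t > 0, HasDerivAt f (f' t) t)
    (h : ∀ t > 0, p * f t ≤ t * f' t) :
    MonotoneOn (fun t => f t * t ^ (-p)) (Ioi 0) := by
  have := antitoneOn_mul_rpow_neg_of_mul_deriv_le (f := -f) (f' := -f') (p := p)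
    (fun t ht => (hf t ht).neg) (fun t ht => by simpa using h t ht)
  simpa using this.neg

lemma apply_mul_le_rpow_mul_iff {k a : ℝ} (hk : 0 < k) (ha : 0 < a) :
    f (k * a) * (k * a) ^ (-p) ≤ f a * a ^ (-p) ↔ f (k * a) ≤ k ^ p * f a := by
  have hkp : 0 < k ^ p := rpow_pos_of_pos hk p
  have hap : 0 < a ^ p := rpow_pos_of_pos ha p
  rw [mul_rpow hk.le ha.le, rpow_neg hk.le, rpow_neg ha.le, ← mul_assoc,
    mul_le_mul_iff_left₀ (inv_pos.2 hap), ← div_eq_mul_inv, div_le_iff₀ hkp, mul_comm (f a)]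

end PowerGrowth

namespace IsNFunction

variable {Φ : ℝ → ℝ} {s : ℝ}

lemma hasDerivAt (h : IsNFunction Φ s) {t : ℝ} (ht : 0 < t) : HasDerivAt Φ (deriv Φ t) t :=
  ((h.contDiffOn_two.differentiableOn (by norm_num)).differentiableAt
    (isOpen_Ioi.mem_nhds ht)).hasDerivAt

lemma hasDerivAt_deriv (h : IsNFunction Φ s) {t : ℝ} (ht : 0 < t) :
    HasDerivAt (deriv Φ) (deriv (deriv Φ) t) t :=
  (((h.contDiffOn_two.deriv_of_isOpen isOpen_Ioi (m := 1) (by norm_num)).differentiableOn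
    (by norm_num)).differentiableAt (isOpen_Ioi.mem_nhds ht)).hasDerivAt

lemma deriv_mul_le_rpow_mul (h : IsNFunction Φ s) {lam a : ℝ} (hlam : 1 ≤ lam) (ha : 0 < a) :
    deriv Φ (lam * a) ≤ lam ^ s * deriv Φ a := by
  have hlam0 : 0 < lam := one_pos.trans_le hlam
  refine (apply_mul_le_rpow_mul_iff hlam0 ha).1 <|
    antitoneOn_mul_rpow_neg_of_mul_deriv_le (fun _ => h.hasDerivAt_deriv) h.index_upper
      ha (mul_pos hlam0 ha) (le_mul_of_one_le_left ha.le hlam)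

lemma deriv_mul_le_rpow_inv_mul (h : IsNFunction Φ s) {μ a : ℝ} (hμ : 0 < μ) (hμ1 : μ ≤ 1)
    (ha : 0 < a) : deriv Φ (μ * a) ≤ μ ^ (1 / s) * deriv Φ a :=
  (apply_mul_le_rpow_mul_iff hμ ha).1 <|
    monotoneOn_mul_rpow_neg_of_le_mul_deriv (fun _ => h.hasDerivAt_deriv) h.index_lower
      (mul_pos hμ ha) ha (mul_le_of_le_one_left ha.le hμ1)

lemma deriv_zero (h : IsNFunction Φ s) : deriv Φ 0 = 0 := by
  by_cases hd : DifferentiableAt ℝ Φ 0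
  · have hslope : Tendsto (slope Φ 0) (nhdsWithin 0 (Ioi 0)) (nhds (deriv Φ 0)) :=
      (hasDerivAt_iff_tendsto_slope.1 hd.hasDerivAt).mono_left
        (nhdsWithin_mono 0 fun x hx => ne_of_gt hx)
    exact tendsto_nhds_unique (hslope.congr fun t => by simp [slope_def_field, h.zero])
      h.tendsto_zero
  · exact deriv_zero_of_not_differentiableAt hd

lemma deriv_nonneg (h : IsNFunction Φ s) {t : ℝ} (ht : 0 ≤ t) : 0 ≤ deriv Φ t := by
  rcases ht.eq_or_lt with rfl | ht
  · exact h.deriv_zero.ge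
  · exact (h.deriv_pos t ht).le

lemma monotoneOn_deriv (h : IsNFunction Φ s) : MonotoneOn (deriv Φ) (Ici 0) := by
  intro a ha b hb hab
  rcases (mem_Ici.1 ha).eq_or_lt with rfl | ha
  · rw [h.deriv_zero]
    exact h.deriv_nonneg hb
  · exact (h.convexOn.subset Ioi_subset_Ici_self (convex_Ioi 0)).monotoneOn_deriv
      (fun t ht => (h.hasDerivAt ht).differentiableAt) ha (ha.trans_le hab) hab

lemma mul_deriv_le (h : IsNFunction Φ s) {t : ℝ} (ht : 0 ≤ t) :
    t * deriv Φ t ≤ 2 ^ (s + 1) * Φ t := by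
  rcases ht.eq_or_lt with rfl | ht
  · simp [h.zero]
  have ht2 : 0 < t / 2 := half_pos ht
  have hdouble : deriv Φ t ≤ 2 ^ s * deriv Φ (t / 2) := by
    simpa [mul_div_cancel₀] using h.deriv_mul_le_rpow_mul one_le_two ht2
  have htangent : t / 2 * deriv Φ (t / 2) ≤ Φ t - Φ (t / 2) := by
    have := h.convexOn.deriv_le_slope (mem_Ici.2 ht2.le) (mem_Ici.2 ht.le) (half_lt_self ht)
      (h.hasDerivAt ht2).differentiableAt
    rw [slope_def_field, le_div_iff₀ (by linarith)] at this
    linarith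
  have h2s : (2 : ℝ) ^ (s + 1) = 2 * 2 ^ s := by rw [rpow_add_one two_ne_zero, mul_comm]
  have hpos : (0 : ℝ) < 2 ^ s := rpow_pos_of_pos two_pos s
  calc t * deriv Φ t ≤ t * (2 ^ s * deriv Φ (t / 2)) := by gcongr
    _ = 2 ^ (s + 1) * (t / 2 * deriv Φ (t / 2)) := by rw [h2s]; ring
    _ ≤ 2 ^ (s + 1) * Φ t := by
      gcongr
      linarith [h.nonneg (t / 2) ht2.le]

lemma mul_deriv_add_mul_deriv_le (h : IsNFunction Φ s) {a b δ : ℝ} (ha : 0 ≤ a) (hb : 0 ≤ b)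
    (hδ : 0 < δ) (hδ1 : δ ≤ 1) :
    a * deriv Φ b + b * deriv Φ a ≤ 2 * δ * (a * deriv Φ a) + 2 * (b * deriv Φ b) / δ ^ s := by
  have hs : 0 < s := one_pos.trans_le h.s_ge_one
  have hδs : 0 < δ ^ s := rpow_pos_of_pos hδ s
  have hA : 0 ≤ δ * (a * deriv Φ a) := by have := h.deriv_nonneg ha; positivity
  have hB : 0 ≤ b * deriv Φ b / δ ^ s := by have := h.deriv_nonneg hb; positivity
  have term_a_deriv_b : a * deriv Φ b ≤ δ * (a * deriv Φ a) + b * deriv Φ b / δ ^ s := by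
    rcases le_or_gt b (δ ^ s * a) with hba | hab
    · rcases ha.eq_or_lt with rfl | ha
      · simpa using hB
      have hδs1 : δ ^ s ≤ 1 := rpow_le_one hδ.le hδ1 hs.le
      have : deriv Φ b ≤ δ * deriv Φ a := by
        calc deriv Φ b ≤ deriv Φ (δ ^ s * a) :=
              h.monotoneOn_deriv hb (mem_Ici.2 (by positivity)) hba
          _ ≤ (δ ^ s) ^ (1 / s) * deriv Φ a := h.deriv_mul_le_rpow_inv_mul hδs hδs1 ha
          _ = δ * deriv Φ a := by rw [← rpow_mul hδ.le, mul_one_div_cancel hs.ne', rpow_one]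
      calc a * deriv Φ b ≤ a * (δ * deriv Φ a) := by gcongr
        _ ≤ _ := by linarith
    · have : a ≤ b / δ ^ s := (le_div_iff₀ hδs).2 (by linarith)
      calc a * deriv Φ b ≤ b / δ ^ s * deriv Φ b := by gcongr; exact h.deriv_nonneg hb
        _ ≤ _ := by rw [div_mul_eq_mul_div]; linarith
  have term_b_deriv_a : b * deriv Φ a ≤ δ * (a * deriv Φ a) + b * deriv Φ b / δ ^ s := by
    rcases le_or_gt b (δ * a) with hba | hab
    · calc b * deriv Φ a ≤ δ * a * deriv Φ a := by gcongr; exact h.deriv_nonneg ha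
        _ ≤ _ := by linarith
    have hb : 0 < b := (by positivity : 0 ≤ δ * a).trans_lt hab
    have : deriv Φ a ≤ deriv Φ b / δ ^ s := by
      calc deriv Φ a ≤ deriv Φ (δ⁻¹ * b) :=
            h.monotoneOn_deriv ha (mem_Ici.2 (by positivity)) ((le_inv_mul_iff₀ hδ).2 hab.le)
        _ ≤ δ⁻¹ ^ s * deriv Φ b := h.deriv_mul_le_rpow_mul (one_le_inv₀ hδ |>.2 hδ1) hb
        _ = deriv Φ b / δ ^ s := by rw [inv_rpow hδ.le, inv_mul_eq_div]
    calc b * deriv Φ a ≤ b * (deriv Φ b / δ ^ s) := by gcongr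
      _ ≤ _ := by rw [← mul_div_assoc]; linarith
  rw [mul_div_assoc]
  linarith

end IsNFunction

theorem statement12_general (s : ℝ) :
    ∃ c : ℝ, 0 < c ∧
      ∀ Φ : ℝ → ℝ, IsNFunction Φ s →
        ∀ s₁ s₂ : ℝ, 0 ≤ s₁ → 0 ≤ s₂ → ∀ ε : ℝ, 0 < ε → ε ≤ 1 →
          s₁ * deriv Φ s₂ + s₂ * deriv Φ s₁ ≤ ε * Φ s₁ + c / ε ^ s * Φ s₂ := by
  set K : ℝ := 2 ^ (s + 1)
  refine ⟨2 * K * (2 * K) ^ s, by positivity, fun Φ hΦ s₁ s₂ hs₁ hs₂ ε hε hε1 => ?_⟩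
  have hK : 1 ≤ K := one_le_rpow one_le_two (by linarith [hΦ.s_ge_one])
  have hδ : 0 < ε / (2 * K) := by positivity
  have hδ1 : ε / (2 * K) ≤ 1 := (div_le_one (by positivity)).2 (by linarith)
  calc s₁ * deriv Φ s₂ + s₂ * deriv Φ s₁
      ≤ 2 * (ε / (2 * K)) * (s₁ * deriv Φ s₁) + 2 * (s₂ * deriv Φ s₂) / (ε / (2 * K)) ^ s :=
        hΦ.mul_deriv_add_mul_deriv_le hs₁ hs₂ hδ hδ1
    _ ≤ 2 * (ε / (2 * K)) * (K * Φ s₁) + 2 * (K * Φ s₂) / (ε / (2 * K)) ^ s := by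
        have := hΦ.mul_deriv_le hs₁
        have := hΦ.mul_deriv_le hs₂
        gcongr
    _ = ε * Φ s₁ + 2 * K * (2 * K) ^ s / ε ^ s * Φ s₂ := by
        rw [div_rpow hε.le (by positivity)]
        field_simp

/-- For every `s ≥ 1` there is a constant `c > 0`, depending only on `s`,
such that every N-function `Φ` with index `s` satisfies
`s₁·Φ'(s₂) + s₂·Φ'(s₁) ≤ ε·Φ(s₁) + (c/ε^s)·Φ(s₂)` for all `s₁, s₂ ≥ 0` and `0 < ε ≤ 1`. -/
theorem statement12 (s : ℝ) (hs : 1 ≤ s) :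
    ∃ c : ℝ, 0 < c ∧
      ∀ Φ : ℝ → ℝ, IsNFunction Φ s →
        ∀ s₁ s₂ : ℝ, 0 ≤ s₁ → 0 ≤ s₂ → ∀ ε : ℝ, 0 < ε → ε ≤ 1 →
          s₁ * deriv Φ s₂ + s₂ * deriv Φ s₁ ≤ ε * Φ s₁ + c / ε ^ s * Φ s₂ :=
  statement12_general s
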